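/- Every m×n matrix pencil Q(λ) with normal rank at most r (r ≤ min{m,n}) can be written as Q(λ) = u₁(λ)v₁(λ)^T + ⋯ + u_r(λ)v_r(λ)^T where uᵢ(λ) ∈ ℂ[λ]^m and vⱼ(λ) ∈ ℂ[λ]^n all have degree at most 1, and for each index i at least one of uᵢ(λ), vᵢ(λ) has degree 0. Moreover there exists a ∈ {0,1,…,r} such that u₁,…,u_a have degree 0 and v_{a+1},…,v_r have degree 0. -/

import Mathlib

open Polynomial

/-- The set `C_a^r` of `m×n` matrix pencils expressible as `∑_{i=1}^r uᵢ(λ)vᵢ(λ)ᵀ` with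
all `uᵢ(λ) ∈ ℂ[λ]^m`, `vᵢ(λ) ∈ ℂ[λ]^n` of degree at most 1, `uᵢ` constant for `i ≤ a`
(0-based: `i < a`) and `vᵢ` constant for `i > a` (0-based: `a ≤ i`). -/
def Cset (m n r a : ℕ) : Set (Matrix (Fin m) (Fin n) (Polynomial ℂ)) :=
  {Q | ∃ u : Fin r → Fin m → Polynomial ℂ, ∃ v : Fin r → Fin n → Polynomial ℂ,
    (∀ i j, (u i j).degree ≤ 1) ∧ (∀ i j, (v i j).degree ≤ 1) ∧
    (∀ i : Fin r, (i : ℕ) < a → ∀ j, (u i j).natDegree = 0) ∧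
    (∀ i : Fin r, a ≤ (i : ℕ) → ∀ j, (v i j).natDegree = 0) ∧
    Q = ∑ i : Fin r, Matrix.vecMulVec (u i) (v i)}

/-- The normal rank of a polynomial matrix: its rank over the field `ℂ(λ)`. -/
noncomputable def normalRank {m n : ℕ} (Q : Matrix (Fin m) (Fin n) (Polynomial ℂ)) : ℕ :=
  (Q.map (algebraMap (Polynomial ℂ) (RatFunc ℂ))).rank


section PencilAuxDevelopment
open Polynomial Matrix Module
set_option maxHeartbeats 1000000
set_option synthInstance.maxHeartbeats 1000000

noncomputable section
namespace PencilAux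



variable {K : Type*} [Field K] {n : ℕ}

/-- Dot-product pairing as a linear map into the dual. -/
noncomputable def dotDual (K : Type*) [Field K] (n : ℕ) :
    (Fin n → K) →ₗ[K] Module.Dual K (Fin n → K) :=
  { toFun := fun y =>
      { toFun := fun x => x ⬝ᵥ y
        map_add' := fun a b => add_dotProduct a b y
        map_smul' := fun c a => smul_dotProduct c a y }
    map_add' := fun y y' => LinearMap.ext fun x => dotProduct_add x y y'
    map_smul' := fun c y => LinearMap.ext fun x => dotProduct_smul c x y }

@[simp] lemma dotDual_apply (y x : Fin n → K) : dotDual K n y x = x ⬝ᵥ y := rfl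

lemma dotDual_injective : Function.Injective (dotDual K n) := by
  rw [← LinearMap.ker_eq_bot, LinearMap.ker_eq_bot']
  intro y hy
  funext j
  have := congrArg (fun f => f (Pi.single j 1)) hy
  simpa [single_dotProduct] using this

lemma dotDual_bijective : Function.Bijective (dotDual K n) := by
  refine ⟨dotDual_injective, ?_⟩
  rw [← LinearMap.injective_iff_surjective_of_finrank_eq_finrank ?h]
  · exact dotDual_injective
  · rw [Subspace.dual_finrank_eq]

/-- The dot-orthogonal complement of a subspace of `Kⁿ`. -/
noncomputable def dotOrth (W : Submodule K (Fin n → K)) : Submodule K (Fin n → K) :=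
  W.dualAnnihilator.comap (dotDual K n)

lemma mem_dotOrth {W : Submodule K (Fin n → K)} {y : Fin n → K} :
    y ∈ dotOrth W ↔ ∀ z ∈ W, z ⬝ᵥ y = 0 := by
  simp [dotOrth, Submodule.mem_dualAnnihilator]

lemma finrank_dotOrth (W : Submodule K (Fin n → K)) :
    finrank K (dotOrth W) + finrank K W = n := by
  have hL : dotOrth W = LinearMap.ker (W.dualRestrict ∘ₗ dotDual K n) := by
    rw [LinearMap.ker_comp, Submodule.dualRestrict_ker_eq_dualAnnihilator]; rfl
  have hsurj : Function.Surjective (W.dualRestrict ∘ₗ dotDual K n) :=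
    (Subspace.dualRestrict_surjective (W := W)).comp dotDual_bijective.surjective
  have h2 := LinearMap.finrank_range_add_finrank_ker (W.dualRestrict ∘ₗ dotDual K n)
  rw [LinearMap.range_eq_top.mpr hsurj, finrank_top, Subspace.dual_finrank_eq, ← hL,
    Module.finrank_fin_fun] at h2
  omega

lemma exists_ne_zero_dotOrth {W : Submodule K (Fin n → K)} (h : W ≠ ⊤) :
    ∃ y : Fin n → K, y ≠ 0 ∧ ∀ z ∈ W, z ⬝ᵥ y = 0 := by
  have h1 : finrank K W < n := by
    have := Submodule.finrank_lt (K := K) (V := Fin n → K) h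
    simpa [Module.finrank_fin_fun] using this
  have h2 : dotOrth W ≠ ⊥ := by
    intro hb
    have := finrank_dotOrth W
    rw [hb, finrank_bot] at this
    omega
  obtain ⟨y, hy, hy0⟩ := Submodule.exists_mem_ne_zero_of_ne_bot h2
  exact ⟨y, hy0, mem_dotOrth.mp hy⟩



variable {K : Type*} [Field K] {m n : ℕ}

lemma eq_zero_of_rank_eq_zero {M : Matrix (Fin m) (Fin n) K} (h : M.rank = 0) : M = 0 := by
  have hr : LinearMap.range M.mulVecLin = ⊥ := by
    rw [Matrix.rank] at h
    exact Submodule.finrank_eq_zero.mp h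
  ext i j
  have hmem : M.mulVecLin (Pi.single j 1) ∈ LinearMap.range M.mulVecLin :=
    LinearMap.mem_range_self _ _
  rw [hr, Submodule.mem_bot] at hmem
  have := congrFun hmem i
  simpa [Matrix.mulVecLin_apply, Matrix.mulVec_single] using this

lemma rank_drop (M : Matrix (Fin m) (Fin n) K) (u f : Fin m → K)
    (hu : u ≠ 0) (hmem : u ∈ LinearMap.range M.mulVecLin) (hf : f ⬝ᵥ u = 1) :
    ((1 - vecMulVec u f) * M).rank + 1 ≤ M.rank := by
  classical
  set L := (1 - vecMulVec u f).mulVecLin with hL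
  set W := LinearMap.range M.mulVecLin with hW
  have hrange : LinearMap.range ((1 - vecMulVec u f) * M).mulVecLin = Submodule.map L W := by
    rw [Matrix.mulVecLin_mul, LinearMap.range_comp]
  have hdom := LinearMap.finrank_range_add_finrank_ker (L.domRestrict W)
  rw [LinearMap.range_domRestrict] at hdom
  have hLu : L u = 0 := by
    have : vecMulVec u f *ᵥ u = u := by
      funext i
      simp only [Matrix.mulVec, Matrix.vecMulVec_apply, dotProduct]
      simp only [mul_assoc, ← Finset.mul_sum]
      rw [show (∑ x, f x * u x) = f ⬝ᵥ u from rfl, hf, mul_one]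
    simp [hL, Matrix.mulVecLin_apply, Matrix.sub_mulVec, this]
  have hker : 0 < finrank K (LinearMap.ker (L.domRestrict W)) := by
    refine (Module.finrank_pos_iff (R := K) (M := LinearMap.ker (L.domRestrict W))).mpr ?_
    refine nontrivial_of_ne ⟨⟨u, hmem⟩, ?_⟩ 0 ?_
    · simp only [LinearMap.mem_ker, LinearMap.domRestrict_apply]; exact hLu
    · intro hc
      apply hu
      simpa [Subtype.ext_iff] using hc
  have : M.rank = finrank K W := rfl
  have h2 : ((1 - vecMulVec u f) * M).rank = finrank K (Submodule.map L W) := by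
    rw [Matrix.rank, hrange]
  omega




abbrev F := RatFunc ℂ

def φ : Polynomial ℂ →+* F := algebraMap (Polynomial ℂ) F

lemma φ_injective : Function.Injective φ := IsFractionRing.injective _ _

def constV {k : ℕ} (c : Fin k → ℂ) : Fin k → F := fun j => algebraMap ℂ F (c j)

def polyV {k : ℕ} (w : Fin k → Polynomial ℂ) : Fin k → F := fun j => φ (w j)

lemma constV_eq_polyV {k : ℕ} (c : Fin k → ℂ) : constV c = polyV (fun j => C (c j)) := by
  funext j
  simp only [constV, polyV, φ]
  rw [IsScalarTower.algebraMap_apply ℂ (Polynomial ℂ) F, Polynomial.algebraMap_eq]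

lemma constV_injective {k : ℕ} : Function.Injective (constV (k := k)) := by
  intro a b h
  funext j
  exact (algebraMap ℂ F).injective (congrFun h j)

lemma constV_ne_zero {k : ℕ} {c : Fin k → ℂ} (h : c ≠ 0) : constV c ≠ 0 := by
  intro hc; apply h
  apply constV_injective
  rw [hc]; funext j; simp [constV]

lemma polyV_mulVec {m n : ℕ} (Q : Matrix (Fin m) (Fin n) (Polynomial ℂ))
    (w : Fin n → Polynomial ℂ) : polyV (Q *ᵥ w) = Q.map φ *ᵥ polyV w := by
  funext i
  exact RingHom.map_mulVec φ Q w i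

lemma polyV_injective {k : ℕ} : Function.Injective (polyV (k := k)) := by
  intro a b h; funext j; exact φ_injective (congrFun h j)

lemma polyV_smul {k : ℕ} (p : Polynomial ℂ) (w : Fin k → Polynomial ℂ) :
    polyV (p • w) = φ p • polyV w := by
  funext j; simp [polyV, Pi.smul_apply, smul_eq_mul, _root_.map_mul]




/-- entrywise derivative of a vector of polynomials -/
def D {k : ℕ} (w : Fin k → Polynomial ℂ) : Fin k → Polynomial ℂ := fun j => derivative (w j)

lemma D_iterate {k : ℕ} (w : Fin k → Polynomial ℂ) (t : ℕ) (j : Fin k) :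
    (D^[t] w) j = derivative^[t] (w j) := by
  induction t generalizing w with
  | zero => rfl
  | succ t ih =>
    rw [Function.iterate_succ_apply, Function.iterate_succ_apply, ih]
    rfl

lemma D_mulVec {m n : ℕ} (M : Matrix (Fin m) (Fin n) (Polynomial ℂ))
    (w : Fin n → Polynomial ℂ) :
    D (M *ᵥ w) = (Matrix.of fun i j => derivative (M i j)) *ᵥ w + M *ᵥ D w := by
  funext i
  simp only [D, Pi.add_apply, Matrix.mulVec, dotProduct, Matrix.of_apply]
  rw [map_sum, ← Finset.sum_add_distrib]
  exact Finset.sum_congr rfl fun j _ => derivative_mul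

lemma D_smul {k : ℕ} (c : ℂ) (w : Fin k → Polynomial ℂ) : D (c • w) = c • D w := by
  funext j
  simp [D, derivative_smul]

lemma chain {m n : ℕ} (Q : Matrix (Fin m) (Fin n) (Polynomial ℂ))
    (h2 : ∀ i j, derivative (derivative (Q i j)) = 0)
    (w : Fin n → Polynomial ℂ) (hw : Q *ᵥ w = 0) (k : ℕ) :
    Q *ᵥ D^[k + 1] w =
      (-((k : ℂ) + 1)) • ((Matrix.of fun i j => derivative (Q i j)) *ᵥ D^[k] w) := by
  set QD := (Matrix.of fun i j => derivative (Q i j)) with hQD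
  have hQDD : (Matrix.of fun i j => derivative (QD i j)) = 0 := by
    exact Matrix.ext fun i j => h2 i j
  induction k with
  | zero =>
    have h0 : D (Q *ᵥ w) = 0 := by rw [hw]; funext j; simp [D]
    rw [D_mulVec] at h0
    have := eq_neg_of_add_eq_zero_right h0
    simpa [neg_smul] using this
  | succ k ih =>
    have h0 := congrArg D ih
    rw [D_mulVec, D_smul, D_mulVec, hQDD, Matrix.zero_mulVec, zero_add] at h0
    have h1 : Q *ᵥ D^[k + 1 + 1] w
        = (-((k : ℂ) + 1)) • (QD *ᵥ D^[k + 1] w) - QD *ᵥ D^[k + 1] w := by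
      rw [eq_sub_iff_add_eq, add_comm]
      simpa [Function.iterate_succ_apply'] using h0
    rw [h1, sub_eq_add_neg, ← neg_one_smul (R := ℂ) (QD *ᵥ D^[k+1] w), ← add_smul]
    congr 1
    push_cast
    ring

lemma iterate_deriv_eq (p : Polynomial ℂ) (e : ℕ) (hp : p.natDegree ≤ e) :
    derivative^[e] p = C ((e.factorial : ℂ) * p.coeff e) := by
  ext N
  rw [Polynomial.coeff_iterate_derivative]
  match N with
  | 0 =>
    rw [Polynomial.coeff_C]
    simp [Nat.descFactorial_self, nsmul_eq_mul]
  | N + 1 =>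
    rw [Polynomial.coeff_C]
    have : p.coeff (N + 1 + e) = 0 := by
      apply Polynomial.coeff_eq_zero_of_natDegree_lt
      omega
    simp [this]


lemma deriv_of_deg_le_one {p : Polynomial ℂ} (h : p.degree ≤ 1) :
    derivative p = C (p.coeff 1) := by
  conv_lhs => rw [eq_X_add_C_of_degree_le_one h]
  simp

lemma polyV_csmul {k : ℕ} (c : ℂ) (w : Fin k → Polynomial ℂ) :
    polyV (c • w) = algebraMap ℂ F c • polyV w := by
  funext j
  show φ (c • w j) = (algebraMap ℂ F c • polyV w) j
  rw [Pi.smul_apply, smul_eq_mul, Algebra.smul_def, _root_.map_mul]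
  show algebraMap (Polynomial ℂ) F (algebraMap ℂ (Polynomial ℂ) c) * _ = _
  rw [← IsScalarTower.algebraMap_apply ℂ (Polynomial ℂ) F]
  rfl

lemma exists_const_vec {m n : ℕ} (Q : Matrix (Fin m) (Fin n) (Polynomial ℂ))
    (hdeg : ∀ i j, (Q i j).degree ≤ 1) (hQ : Q.map φ ≠ 0) :
    (∃ u : Fin m → ℂ, u ≠ 0 ∧ constV u ∈ LinearMap.range (Q.map φ).mulVecLin) ∨
    (∃ v : Fin n → ℂ, v ≠ 0 ∧ constV v ∈ LinearMap.range ((Q.map φ)ᵀ).mulVecLin) := by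
  classical
  set Qf := Q.map φ with hQf
  set Kk : Submodule F (Fin n → F) := LinearMap.ker Qf.mulVecLin with hKk
  set T : Set (Fin n → ℂ) := {c | constV c ∈ Kk} with hT
  set Sp : Submodule F (Fin n → F) := Submodule.span F (constV '' T) with hSp
  have hSpK : Sp ≤ Kk := by
    rw [hSp, Submodule.span_le]
    rintro x ⟨c, hc, rfl⟩
    exact hc
  by_cases hc : Kk ≤ Sp
  · -- Case A : a constant vector in the row space
    right
    set V : Submodule ℂ (Fin n → ℂ) := Submodule.span ℂ T with hV
    have hVSp : ∀ c ∈ V, constV c ∈ Sp := by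
      intro c hcV
      let ℓ : (Fin n → ℂ) →ₗ[ℂ] (Fin n → F) :=
        { toFun := constV
          map_add' := fun a b => funext fun j => map_add (algebraMap ℂ F) (a j) (b j)
          map_smul' := fun a b => funext fun j => by
            show algebraMap ℂ F (a * b j) = a • algebraMap ℂ F (b j)
            rw [Algebra.smul_def, _root_.map_mul] }
      have hle : V ≤ (Sp.restrictScalars ℂ).comap ℓ := by
        rw [hV, Submodule.span_le]
        intro x hx
        have hx' : constV x ∈ Sp := Submodule.subset_span ⟨x, hx, rfl⟩
        exact hx'
      exact hle hcV
    have hVne : V ≠ ⊤ := by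
      intro hVtop
      apply hQ
      have hcols : ∀ j, constV (Pi.single j 1) ∈ Kk := fun j =>
        hSpK (hVSp _ (hVtop ▸ Submodule.mem_top))
      ext i j
      have h1 : constV (Pi.single j (1 : ℂ)) = Pi.single j (1 : F) := by
        funext l
        rcases eq_or_ne l j with rfl | hl
        · simp [constV]
        · simp [constV, Pi.single_eq_of_ne hl]
      have h2 := hcols j
      rw [hKk, LinearMap.mem_ker, h1] at h2
      have := congrFun h2 i
      simpa [Matrix.mulVecLin_apply, Matrix.mulVec_single] using this
    obtain ⟨y, hy0, hyT⟩ := exists_ne_zero_dotOrth hVne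
    refine ⟨y, hy0, ?_⟩
    have key : ∀ z ∈ Sp, z ⬝ᵥ constV y = 0 := by
      intro z hzSp
      rw [hSp] at hzSp
      induction hzSp using Submodule.span_induction with
      | mem x hx =>
        obtain ⟨cx, hcx, rfl⟩ := hx
        have h3 : cx ⬝ᵥ y = 0 := hyT _ (Submodule.subset_span hcx)
        calc constV cx ⬝ᵥ constV y = algebraMap ℂ F (cx ⬝ᵥ y) :=
              (RingHom.map_dotProduct (algebraMap ℂ F) cx y).symm
        _ = 0 := by rw [h3, map_zero]
      | zero => simp
      | add x y' hx hy hx' hy' => rw [add_dotProduct, hx', hy', add_zero]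
      | smul a x hx hx' => rw [smul_dotProduct, hx', smul_zero]
    have hyK : ∀ z ∈ Kk, z ⬝ᵥ constV y = 0 := fun z hz => key z (hc hz)
    have hrange : LinearMap.range (Qfᵀ).mulVecLin = dotOrth Kk := by
      have hle : LinearMap.range (Qfᵀ).mulVecLin ≤ dotOrth Kk := by
        rintro x ⟨f, rfl⟩
        rw [mem_dotOrth]
        intro z hz
        rw [Matrix.mulVecLin_apply, Matrix.dotProduct_mulVec, Matrix.vecMul_transpose]
        have hz0 : Qf *ᵥ z = 0 := hz
        rw [hz0, zero_dotProduct]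
      refine Submodule.eq_of_le_of_finrank_le hle ?_
      have e1 := finrank_dotOrth Kk
      have e2 := LinearMap.finrank_range_add_finrank_ker Qf.mulVecLin
      rw [Module.finrank_fin_fun, ← hKk] at e2
      have e3 : finrank F (LinearMap.range (Qfᵀ).mulVecLin) = Qf.rank := by
        rw [show Qf.rank = Qfᵀ.rank from (Matrix.rank_transpose Qf).symm]
        rfl
      have e4 : finrank F (LinearMap.range Qf.mulVecLin) = Qf.rank := rfl
      omega
    rw [hQf] at hrange ⊢
    rw [hrange]
    exact mem_dotOrth.mpr hyK
  · -- Case B : a constant vector in the column space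
    left
    obtain ⟨z', hz'K, hz'Sp⟩ := SetLike.not_le_iff_exists.mp hc
    obtain ⟨b, hb⟩ := IsLocalization.exist_integer_multiples
      (nonZeroDivisors (Polynomial ℂ)) Finset.univ z'
    choose wfun hwfun using fun j => hb j (Finset.mem_univ j)
    set z : Fin n → Polynomial ℂ := wfun with hzdef
    have hzv : polyV z = φ (b : Polynomial ℂ) • z' := by
      funext j
      have h := hwfun j
      show φ (z j) = _
      rw [show φ (z j) = algebraMap (Polynomial ℂ) F (z j) from rfl, h, Algebra.smul_def]
      rfl
    have hφb : φ (b : Polynomial ℂ) ≠ 0 := fun h =>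
      nonZeroDivisors.ne_zero b.2 (φ_injective (by rw [h, map_zero]))
    have hzK : polyV z ∈ Kk := by rw [hzv]; exact Kk.smul_mem _ hz'K
    have hzSp : polyV z ∉ Sp := by
      rw [hzv]
      intro hmem
      apply hz'Sp
      have := Sp.smul_mem (φ (b : Polynomial ℂ))⁻¹ hmem
      rwa [inv_smul_smul₀ hφb] at this
    have hQz : Q *ᵥ z = 0 := by
      apply polyV_injective
      rw [polyV_mulVec]
      have h5 : Qf *ᵥ polyV z = 0 := hzK
      rw [← hQf, h5]
      funext j; simp [polyV]
    set Pp : (Fin n → Polynomial ℂ) → Prop :=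
      fun w => Q *ᵥ w = 0 ∧ polyV w ∉ Sp with hPp
    have hex : ∃ N : ℕ, ∃ w, Pp w ∧ (Finset.univ.sup fun j => (w j).natDegree) ≤ N :=
      ⟨_, z, ⟨hQz, hzSp⟩, le_rfl⟩
    set e := Nat.find hex with he
    obtain ⟨w, hPw, hDwle⟩ := Nat.find_spec hex
    have hmin : ∀ w', Pp w' → e ≤ Finset.univ.sup fun j => (w' j).natDegree := by
      intro w' hw'
      by_contra hlt
      push_neg at hlt
      exact Nat.find_min hex hlt ⟨w', hw', le_rfl⟩
    have hDw : (Finset.univ.sup fun j => (w j).natDegree) = e :=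
      le_antisymm hDwle (hmin w hPw)
    have hwdeg : ∀ j, (w j).natDegree ≤ e := by
      intro j
      rw [← hDw]
      exact Finset.le_sup (f := fun j => (w j).natDegree) (Finset.mem_univ j)
    set lc : Fin n → ℂ := fun j => (w j).coeff e with hlcdef
    have hposlc : ∀ j, (w j).coeff e = lc j := fun j => rfl
    have hlc : lc ≠ 0 := by
      intro h0
      have hco : ∀ j, (w j).coeff e = 0 := fun j => congrFun h0 j
      rcases Nat.eq_zero_or_pos e with he0 | hepos
      · have hw0 : w = 0 := by
          funext j
          have h1 : (w j).natDegree ≤ 0 := he0 ▸ hwdeg j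
          have h2 : (w j).coeff 0 = 0 := he0 ▸ hco j
          rw [Polynomial.eq_C_of_natDegree_le_zero h1, h2, map_zero]
          rfl
        apply hPw.2
        rw [hw0, show polyV (0 : Fin n → Polynomial ℂ) = 0 from funext fun j => map_zero φ]
        exact Sp.zero_mem
      · have hsmall : (Finset.univ.sup fun j => (w j).natDegree) ≤ e - 1 := by
          refine Finset.sup_le fun j _ => ?_
          rw [Polynomial.natDegree_le_iff_coeff_eq_zero]
          intro N hN
          rcases eq_or_lt_of_le (show e ≤ N by omega) with rfl | h
          · exact hco j
          · exact Polynomial.coeff_eq_zero_of_natDegree_lt (lt_of_le_of_lt (hwdeg j) h)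
        omega
    have h2d : ∀ i j, derivative (derivative (Q i j)) = 0 := by
      intro i j
      rw [deriv_of_deg_le_one (hdeg i j), derivative_C]
    set BP : Matrix (Fin m) (Fin n) (Polynomial ℂ) :=
      Matrix.of fun i j => derivative (Q i j) with hBP
    set Bc : Matrix (Fin m) (Fin n) ℂ := Matrix.of fun i j => (Q i j).coeff 1 with hBc
    set Ac : Matrix (Fin m) (Fin n) ℂ := Matrix.of fun i j => (Q i j).coeff 0 with hAc
    have hBPc : BP = Matrix.of fun i j => C (Bc i j) :=
      Matrix.ext fun i j => deriv_of_deg_le_one (hdeg i j)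
    have hrangemem : ∀ k : ℕ, polyV (BP *ᵥ D^[k] w) ∈ LinearMap.range Qf.mulVecLin := by
      intro k
      have hch := chain Q h2d w hPw.1 k
      have hpv : Qf *ᵥ polyV (D^[k+1] w)
          = algebraMap ℂ F (-((k : ℂ)+1)) • polyV (BP *ᵥ D^[k] w) := by
        rw [hQf, ← polyV_mulVec, hch, ← hBP, polyV_csmul]
      have hne : algebraMap ℂ F (-((k : ℂ)+1)) ≠ 0 := by
        intro h
        have h0 : (-((k : ℂ)+1)) = 0 := (algebraMap ℂ F).injective (by rw [h, map_zero])
        have hk : ((k : ℂ)+1) ≠ 0 := by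
          exact_mod_cast Nat.succ_ne_zero k
        exact hk (neg_eq_zero.mp h0)
      have hmem := LinearMap.mem_range_self Qf.mulVecLin (polyV (D^[k+1] w))
      rw [show Qf.mulVecLin (polyV (D^[k+1] w)) = Qf *ᵥ polyV (D^[k+1] w) from rfl,
        hpv] at hmem
      have h3 := (LinearMap.range Qf.mulVecLin).smul_mem
        (algebraMap ℂ F (-((k : ℂ)+1)))⁻¹ hmem
      rwa [inv_smul_smul₀ hne] at h3
    have hDe : D^[e] w = fun j => C ((e.factorial : ℂ) * lc j) := by
      funext j
      rw [D_iterate, iterate_deriv_eq _ _ (hwdeg j)]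
    have hfacne : ((e.factorial : ℂ)) ≠ 0 := by
      exact_mod_cast Nat.factorial_ne_zero e
    have hBmem0 : polyV (BP *ᵥ fun j => C (lc j)) ∈ LinearMap.range Qf.mulVecLin := by
      have h1 := hrangemem e
      rw [hDe] at h1
      have harg : ((e.factorial : ℂ) • fun j => C (lc j))
          = fun j => C ((e.factorial : ℂ) * lc j) := by
        funext j
        rw [Pi.smul_apply, Polynomial.smul_C, smul_eq_mul]
      rw [← harg, Matrix.mulVec_smul, polyV_csmul] at h1
      have h3 := (LinearMap.range Qf.mulVecLin).smul_mem
        (algebraMap ℂ F (e.factorial : ℂ))⁻¹ h1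
      rwa [inv_smul_smul₀ (by
        intro hz
        exact hfacne ((algebraMap ℂ F).injective (by rw [hz, map_zero])))] at h3
    have hBCl : (BP *ᵥ fun j => C (lc j)) = fun i => C ((Bc *ᵥ lc) i) := by
      funext i
      rw [hBPc]
      show (Matrix.of fun i j => C (Bc i j)) i ⬝ᵥ (fun j => C (lc j)) = C (Bc i ⬝ᵥ lc)
      rw [RingHom.map_dotProduct C (Bc i) lc]
      rfl
    have hBmem : constV (Bc *ᵥ lc) ∈ LinearMap.range Qf.mulVecLin := by
      rw [constV_eq_polyV]
      have : (fun j => C ((Bc *ᵥ lc) j)) = (BP *ᵥ fun j => C (lc j)) := by rw [hBCl]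
      rw [this]
      exact hBmem0
    have hsplit : Q *ᵥ (fun j => C (lc j))
        = (fun i => C ((Ac *ᵥ lc) i)) + (X : Polynomial ℂ) • fun i => C ((Bc *ᵥ lc) i) := by
      funext i
      simp only [Matrix.mulVec, dotProduct, Pi.add_apply, Pi.smul_apply, smul_eq_mul]
      have hterm : ∀ j, Q i j * C (lc j)
          = C (Ac i j * lc j) + X * C (Bc i j * lc j) := by
        intro j
        conv_lhs => rw [eq_X_add_C_of_degree_le_one (hdeg i j)]
        show (C (Bc i j) * X + C (Ac i j)) * C (lc j) = _
        rw [C_mul, C_mul]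
        ring
      rw [Finset.sum_congr rfl fun j _ => hterm j, Finset.sum_add_distrib, ← Finset.mul_sum,
        ← map_sum C, ← map_sum C]
    have hQclc : polyV (Q *ᵥ fun j => C (lc j)) ∈ LinearMap.range Qf.mulVecLin := by
      rw [polyV_mulVec, ← hQf]
      exact LinearMap.mem_range_self _ _
    have hAmem : constV (Ac *ᵥ lc) ∈ LinearMap.range Qf.mulVecLin := by
      have hsub : (fun i => C ((Ac *ᵥ lc) i))
          = (Q *ᵥ fun j => C (lc j)) - (X : Polynomial ℂ) • fun i => C ((Bc *ᵥ lc) i) := by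
        rw [hsplit, add_sub_cancel_right]
      have hpv : polyV (fun i => C ((Ac *ᵥ lc) i))
          = polyV (Q *ᵥ fun j => C (lc j)) - φ X • polyV (fun i => C ((Bc *ᵥ lc) i)) := by
        funext i
        rw [hsub]
        simp only [polyV, Pi.sub_apply, Pi.smul_apply, smul_eq_mul, map_sub, _root_.map_mul]
      rw [constV_eq_polyV, hpv]
      refine Submodule.sub_mem _ hQclc (Submodule.smul_mem _ _ ?_)
      rw [← constV_eq_polyV]
      exact hBmem
    rcases eq_or_ne (Bc *ᵥ lc) 0 with hB0 | hBne
    · rcases eq_or_ne (Ac *ᵥ lc) 0 with hA0 | hAne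
      · exfalso
        have hQlc : Q *ᵥ (fun j => C (lc j)) = 0 := by
          rw [hsplit, hA0, hB0]
          funext i; simp
        have hlcK : constV lc ∈ Kk := by
          rw [hKk, LinearMap.mem_ker]
          show Qf *ᵥ constV lc = 0
          rw [constV_eq_polyV, hQf, ← polyV_mulVec, hQlc]
          funext j; simp [polyV]
        have hlcSp : constV lc ∈ Sp :=
          Submodule.subset_span ⟨lc, hlcK, rfl⟩
        rcases Nat.eq_zero_or_pos e with he0 | hepos
        · apply hPw.2
          have hw0 : w = fun j => C (lc j) := by
            funext j
            have h1 : (w j).natDegree ≤ 0 := he0 ▸ hwdeg j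
            rw [Polynomial.eq_C_of_natDegree_le_zero h1]
            congr 1
            rw [hlcdef]
            simp [he0]
          rw [hw0, ← constV_eq_polyV]
          exact hlcSp
        · set wt : Fin n → Polynomial ℂ := fun j => w j - C (lc j) * X ^ e with hwt
          have hwtsm : wt = w - (X ^ e : Polynomial ℂ) • fun j => C (lc j) := by
            funext j
            simp only [hwt, Pi.sub_apply, Pi.smul_apply, smul_eq_mul]
            ring
          have hQwt : Q *ᵥ wt = 0 := by
            rw [hwtsm, Matrix.mulVec_sub, Matrix.mulVec_smul, hPw.1, hQlc, smul_zero, sub_zero]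
          have hwtSp : polyV wt ∉ Sp := by
            intro hmem
            apply hPw.2
            have hpv : polyV wt = polyV w - φ (X ^ e) • constV lc := by
              funext j
              simp only [hwtsm, polyV, Pi.sub_apply, Pi.smul_apply, smul_eq_mul, map_sub,
                _root_.map_mul, constV_eq_polyV]
            have hadd := Sp.add_mem hmem (Sp.smul_mem (φ (X ^ e)) hlcSp)
            rw [hpv, sub_add_cancel] at hadd
            exact hadd
          have hle := hmin wt ⟨hQwt, hwtSp⟩
          have hsmall : (Finset.univ.sup fun j => (wt j).natDegree) ≤ e - 1 := by
            refine Finset.sup_le fun j _ => ?_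
            rw [Polynomial.natDegree_le_iff_coeff_eq_zero]
            intro N hN
            simp only [hwt, Polynomial.coeff_sub, Polynomial.coeff_C_mul,
              Polynomial.coeff_X_pow]
            rcases eq_or_lt_of_le (show e ≤ N by omega) with rfl | h
            · rw [if_pos rfl, mul_one, hposlc j, sub_self]
            · rw [if_neg (by omega), mul_zero, sub_zero]
              exact Polynomial.coeff_eq_zero_of_natDegree_lt (lt_of_le_of_lt (hwdeg j) h)
          omega
      · exact ⟨Ac *ᵥ lc, hAne, hAmem⟩
    · exact ⟨Bc *ᵥ lc, hBne, hBmem⟩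

lemma φ_C (c : ℂ) : φ (C c) = algebraMap ℂ F c := by
  rw [IsScalarTower.algebraMap_apply ℂ (Polynomial ℂ) F, Polynomial.algebraMap_eq]
  rfl

lemma peel {m n : ℕ} (Q : Matrix (Fin m) (Fin n) (Polynomial ℂ))
    (hdeg : ∀ i j, (Q i j).degree ≤ 1) (u : Fin m → ℂ) (hu : u ≠ 0)
    (hmem : constV u ∈ LinearMap.range (Q.map φ).mulVecLin) :
    ∃ (vv : Fin n → Polynomial ℂ) (R : Matrix (Fin m) (Fin n) (Polynomial ℂ)),
      (∀ j, (vv j).degree ≤ 1) ∧ (∀ i j, (R i j).degree ≤ 1) ∧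
      (R.map φ).rank + 1 ≤ (Q.map φ).rank ∧
      Q = Matrix.vecMulVec (fun i => C (u i)) vv + R := by
  classical
  obtain ⟨i0, hi0⟩ := Function.ne_iff.mp hu
  set f : Fin m → ℂ := Pi.single i0 (u i0)⁻¹ with hf
  have hfu : f ⬝ᵥ u = 1 := by
    rw [hf, single_dotProduct, inv_mul_cancel₀ hi0]
  set cu : Fin m → Polynomial ℂ := fun i => C (u i) with hcu
  set cf : Fin m → Polynomial ℂ := fun i => C (f i) with hcf
  set vv : Fin n → Polynomial ℂ := cf ᵥ* Q with hvv
  have hone : ((0 : WithBot ℕ) + 1 : WithBot ℕ) ≤ 1 := by norm_num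
  have hvdeg : ∀ j, (vv j).degree ≤ 1 := by
    intro j
    show (∑ i : Fin m, cf i * Q i j).degree ≤ 1
    refine le_trans (le_trans (Polynomial.degree_sum_le _ _) ?_) hone
    refine Finset.sup_le fun i _ => ?_
    exact le_trans (Polynomial.degree_mul_le _ _)
      (add_le_add Polynomial.degree_C_le (hdeg i j))
  set R : Matrix (Fin m) (Fin n) (Polynomial ℂ) := Q - Matrix.vecMulVec cu vv with hR
  have hRdeg : ∀ i j, (R i j).degree ≤ 1 := by
    intro i j
    show (Q i j - Matrix.vecMulVec cu vv i j).degree ≤ 1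
    refine le_trans (Polynomial.degree_sub_le _ _) (max_le (hdeg i j) ?_)
    rw [Matrix.vecMulVec_apply]
    exact le_trans (le_trans (Polynomial.degree_mul_le _ _)
      (add_le_add Polynomial.degree_C_le (hvdeg j))) hone
  have hAQ : Matrix.vecMulVec cu cf * Q = Matrix.vecMulVec cu vv := by
    refine Matrix.ext fun i j => ?_
    show ∑ k : Fin m, Matrix.vecMulVec cu cf i k * Q k j = cu i * ∑ k : Fin m, cf k * Q k j
    rw [Finset.mul_sum]
    exact Finset.sum_congr rfl fun k _ => by rw [Matrix.vecMulVec_apply]; ring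
  have hfact : R = (1 - Matrix.vecMulVec cu cf) * Q := by
    rw [Matrix.sub_mul, Matrix.one_mul, hAQ, hR]
  have hmapvmv : (Matrix.vecMulVec cu cf).map φ
      = Matrix.vecMulVec (constV u) (constV f) := by
    ext i j
    simp only [Matrix.map_apply, Matrix.vecMulVec_apply, hcu, hcf, _root_.map_mul, φ_C]
    rfl
  have hmapfact : R.map φ = (1 - Matrix.vecMulVec (constV u) (constV f)) * Q.map φ := by
    rw [hfact, Matrix.map_mul (f := φ)]
    congr 1
    rw [Matrix.map_sub _ (fun a b => by rw [map_sub]), hmapvmv]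
    congr 1
    exact Matrix.map_one _ (map_zero φ) (_root_.map_one φ)
  have hdrop := rank_drop (Q.map φ) (constV u) (constV f) (constV_ne_zero hu) hmem
    (by
      have : constV f ⬝ᵥ constV u = algebraMap ℂ F (f ⬝ᵥ u) :=
        (RingHom.map_dotProduct (algebraMap ℂ F) f u).symm
      rw [this, hfu, RingHom.map_one])
  refine ⟨vv, R, hvdeg, hRdeg, ?_, by rw [hR]; abel⟩
  rw [hmapfact]
  exact hdrop

lemma main : ∀ (ρ m n : ℕ) (Q : Matrix (Fin m) (Fin n) (Polynomial ℂ)),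
    (∀ i j, (Q i j).degree ≤ 1) → (Q.map φ).rank ≤ ρ →
    ∃ (u : Fin ρ → Fin m → Polynomial ℂ) (v : Fin ρ → Fin n → Polynomial ℂ),
      (∀ i j, (u i j).degree ≤ 1) ∧ (∀ i j, (v i j).degree ≤ 1) ∧
      (∀ i, (∀ j, (u i j).natDegree = 0) ∨ (∀ j, (v i j).natDegree = 0)) ∧
      Q = ∑ i, Matrix.vecMulVec (u i) (v i) := by
  intro ρ
  induction ρ with
  | zero =>
    intro m n Q hdeg hrank
    refine ⟨Fin.elim0, Fin.elim0, fun i => i.elim0, fun i => i.elim0, fun i => i.elim0, ?_⟩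
    have h0 : (Q.map φ).rank = 0 := le_antisymm hrank (Nat.zero_le _)
    have hz := eq_zero_of_rank_eq_zero h0
    have hQ0 : Q = 0 := by
      refine Matrix.ext fun i j => ?_
      have h1 : φ (Q i j) = 0 := by
        have := congrFun (congrFun hz i) j
        simpa [Matrix.map_apply] using this
      exact φ_injective (by simp [h1])
    rw [hQ0]
    simp
  | succ ρ ih =>
    intro m n Q hdeg hrank
    by_cases hQ0 : Q.map φ = 0
    · have hQz : Q = 0 := by
        refine Matrix.ext fun i j => ?_
        have h1 : φ (Q i j) = 0 := by
          have := congrFun (congrFun hQ0 i) j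
          simpa [Matrix.map_apply] using this
        exact φ_injective (by simp [h1])
      refine ⟨fun _ _ => 0, fun _ _ => 0, ?_, ?_, ?_, ?_⟩
      · intro i j; simp
      · intro i j; simp
      · intro i; left; intro j; simp
      · rw [hQz]
        have : ∀ i : Fin (ρ+1), Matrix.vecMulVec (fun _ : Fin m => (0 : Polynomial ℂ))
            (fun _ : Fin n => (0 : Polynomial ℂ)) = 0 := by
          intro i
          refine Matrix.ext fun a b => ?_
          rw [Matrix.vecMulVec_apply, mul_zero]
          rfl
        rw [Finset.sum_congr rfl fun i _ => this i, Finset.sum_const, smul_zero]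
    · rcases exists_const_vec Q hdeg hQ0 with ⟨u0, hu0, hmem⟩ | ⟨v0, hv0, hmem⟩
      · obtain ⟨vv, R, hv1, hR1, hrk, hQeq⟩ := peel Q hdeg u0 hu0 hmem
        obtain ⟨u, v, hud, hvd, hdisj, hsum⟩ := ih m n R hR1 (by omega)
        refine ⟨Fin.cons (fun i => C (u0 i)) u, Fin.cons vv v, ?_, ?_, ?_, ?_⟩
        · intro i j
          refine Fin.cases ?_ ?_ i
          · simp only [Fin.cons_zero]
            exact le_trans Polynomial.degree_C_le (by norm_num)
          · intro i'; simp only [Fin.cons_succ]; exact hud i' j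
        · intro i j
          refine Fin.cases ?_ ?_ i
          · simp only [Fin.cons_zero]; exact hv1 j
          · intro i'; simp only [Fin.cons_succ]; exact hvd i' j
        · intro i
          refine Fin.cases ?_ ?_ i
          · left; intro j; simp only [Fin.cons_zero]; exact Polynomial.natDegree_C _
          · intro i'; simpa only [Fin.cons_succ] using hdisj i'
        · rw [Fin.sum_univ_succ]
          simp only [Fin.cons_zero, Fin.cons_succ]
          rw [← hsum]
          exact hQeq
      · have hdegT : ∀ i j, ((Qᵀ) i j).degree ≤ 1 := fun i j => hdeg j i
        have hmemT : constV v0 ∈ LinearMap.range ((Qᵀ).map φ).mulVecLin := by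
          rw [Matrix.transpose_map]
          exact hmem
        obtain ⟨vv, R, hv1, hR1, hrk, hQeq⟩ := peel Qᵀ hdegT v0 hv0 hmemT
        have hrkT : ((Rᵀ).map φ).rank ≤ ρ := by
          have h1 : ((Qᵀ).map φ).rank = (Q.map φ).rank := by
            rw [Matrix.transpose_map, Matrix.rank_transpose]
          have h2 : ((Rᵀ).map φ).rank = (R.map φ).rank := by
            rw [Matrix.transpose_map, Matrix.rank_transpose]
          omega
        have hR1T : ∀ i j, ((Rᵀ) i j).degree ≤ 1 := fun i j => hR1 j i
        obtain ⟨u, v, hud, hvd, hdisj, hsum⟩ := ih m n Rᵀ hR1T hrkT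
        have hQeq' : Q = Matrix.vecMulVec vv (fun i => C (v0 i)) + Rᵀ := by
          have h3 := congrArg Matrix.transpose hQeq
          rw [Matrix.transpose_transpose, Matrix.transpose_add] at h3
          rw [h3]
          congr 1
          refine Matrix.ext fun a b => ?_
          show Matrix.vecMulVec (fun i => C (v0 i)) vv b a = _
          rw [Matrix.vecMulVec_apply, Matrix.vecMulVec_apply, mul_comm]
        refine ⟨Fin.cons vv u, Fin.cons (fun i => C (v0 i)) v, ?_, ?_, ?_, ?_⟩
        · intro i j
          refine Fin.cases ?_ ?_ i
          · simp only [Fin.cons_zero]; exact hv1 j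
          · intro i'; simp only [Fin.cons_succ]; exact hud i' j
        · intro i j
          refine Fin.cases ?_ ?_ i
          · simp only [Fin.cons_zero]
            exact le_trans Polynomial.degree_C_le (by norm_num)
          · intro i'; simp only [Fin.cons_succ]; exact hvd i' j
        · intro i
          refine Fin.cases ?_ ?_ i
          · right; intro j; simp only [Fin.cons_zero]; exact Polynomial.natDegree_C _
          · intro i'; simpa only [Fin.cons_succ] using hdisj i'
        · rw [Fin.sum_univ_succ]
          simp only [Fin.cons_zero, Fin.cons_succ]
          rw [← hsum]
          exact hQeq'

lemma sort_disj {r : ℕ} (P Q : Fin r → Prop) (h : ∀ i, P i ∨ Q i) :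
    ∃ (σ : Equiv.Perm (Fin r)) (a : ℕ), a ≤ r ∧
      (∀ i : Fin r, (i : ℕ) < a → P (σ i)) ∧ (∀ i : Fin r, a ≤ (i : ℕ) → Q (σ i)) := by
  classical
  set f : Fin r → ℕ := fun i => if P i then 0 else 1 with hfdef
  set σ := Tuple.sort f with hσ
  have hmono : Monotone (f ∘ σ) := Tuple.monotone_sort f
  set s : Finset (Fin r) := Finset.univ.filter (fun i => f (σ i) = 0) with hs
  have hcard : s.card ≤ r := by
    refine le_trans (Finset.card_le_card (Finset.filter_subset _ _)) ?_
    simp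
  refine ⟨σ, s.card, hcard, ?_, ?_⟩
  · intro i hi
    by_contra hPi
    have hfi : f (σ i) = 1 := by simp only [hfdef]; rw [if_neg hPi]
    have hsub : s ⊆ Finset.Iio i := by
      intro j hj
      rw [Finset.mem_Iio]
      by_contra hij
      push_neg at hij
      have hm := hmono hij
      simp only [Function.comp_apply] at hm
      rw [hs, Finset.mem_filter] at hj
      omega
    have hcc := Finset.card_le_card hsub
    rw [Fin.card_Iio] at hcc
    omega
  · intro i hi
    have hfi : ¬ (f (σ i) = 0) := by
      intro hfi
      have hsub : Finset.Iic i ⊆ s := by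
        intro j hj
        rw [Finset.mem_Iic] at hj
        rw [hs, Finset.mem_filter]
        refine ⟨Finset.mem_univ _, ?_⟩
        have hm := hmono hj
        simp only [Function.comp_apply] at hm
        omega
      have hcc := Finset.card_le_card hsub
      rw [Fin.card_Iic] at hcc
      omega
    rcases h (σ i) with hP | hQ
    · exact absurd (by simp only [hfdef]; rw [if_pos hP]) hfi
    · exact hQ

end PencilAux
end
end PencilAuxDevelopment

/-- Every `m×n` matrix pencil `Q(λ)` with normal rank at most `r` (`r ≤ min{m,n}`)
can be written as `∑_{i=1}^r uᵢ(λ)vᵢ(λ)ᵀ` with all factors of degree at most 1 and,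
for some `a ∈ {0,…,r}`, `u₁,…,u_a` constant and `v_{a+1},…,v_r` constant (so in each
summand at least one factor is constant); i.e. `Q ∈ C_a^r` for some `a ≤ r`. -/
theorem pencil_mem_Cset_of_normalRank_le (m n r : ℕ) (hrm : r ≤ m) (hrn : r ≤ n)
    (Q : Matrix (Fin m) (Fin n) (Polynomial ℂ))
    (hQ : ∀ i j, (Q i j).degree ≤ 1)
    (hrank : normalRank Q ≤ r) :
    ∃ a ≤ r, Q ∈ Cset m n r a := by
  obtain ⟨u, v, hud, hvd, hdisj, hsum⟩ :=
    PencilAux.main r m n Q hQ hrank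
  obtain ⟨σ, a, ha, hPa, hQa⟩ :=
    PencilAux.sort_disj (fun i => ∀ j, (u i j).natDegree = 0)
      (fun i => ∀ j, (v i j).natDegree = 0) hdisj
  refine ⟨a, ha, u ∘ σ, v ∘ σ, fun i j => hud (σ i) j, fun i j => hvd (σ i) j,
    fun i hi j => hPa i hi j, fun i hi j => hQa i hi j, ?_⟩
  rw [hsum]
  exact (Equiv.sum_comp σ fun i => Matrix.vecMulVec (u i) (v i)).symm
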